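/- (Sufficient decrease) Let f : ℝⁿ → ℝ be convex, differentiable, L-smooth, g : ℝⁿ → ℝ convex, and U symmetric with U ⪰ L·I. If x⁺ = prox_{g,U}(x − U⁻¹∇f(x)), then F(x⁺) ≤ F(x) − (1/2)‖x⁺ − x‖²_U, where F = f + g and ‖z‖²_U = zᵀUz. -/

import Mathlib

noncomputable section

/-- Euclidean dot product on `Fin n → ℝ`. -/
def dot {n : ℕ} (a b : Fin n → ℝ) : ℝ := ∑ i, a i * b i

/-- Squared Euclidean norm. -/
def sqnorm {n : ℕ} (a : Fin n → ℝ) : ℝ := dot a a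

/-!
Comparing the prox point `x⁺` with the candidate `x` along the segment `[x⁺, x]`, convexity of
`g` and `t → 0` give the three-point inequality
`g x⁺ + ⟨∇f x, x⁺ - x⟩ + ‖x⁺ - x‖²_U ≤ g x`. Adding the descent lemma
`f x⁺ ≤ f x + ⟨∇f x, x⁺ - x⟩ + (L/2)‖x⁺ - x‖²`, obtained by integrating the Lipschitz bound on
`∇f` along the segment, and using `L‖·‖² ≤ ‖·‖²_U` gives the claim.
-/

open Set Filter Topology Matrix

lemma nonneg_of_forall_mem_Ioc_nonneg_add_mul {a b : ℝ}
    (h : ∀ t ∈ Ioc (0 : ℝ) 1, 0 ≤ a + t * b) : 0 ≤ a := by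
  have hlim : Tendsto (fun t : ℝ => a + t * b) (𝓝 0) (𝓝 (a + 0 * b)) :=
    (by fun_prop : Continuous fun t : ℝ => a + t * b).tendsto 0
  rw [zero_mul, add_zero] at hlim
  exact ge_of_tendsto (hlim.mono_left nhdsWithin_le_nhds)
    (eventually_of_mem (Ioc_mem_nhdsGT zero_lt_one) h)

namespace LinearMap.BilinForm

variable {E : Type*} [AddCommGroup E] [Module ℝ E] {B : LinearMap.BilinForm ℝ E}

lemma IsSymm.apply_sub_sub (hB : B.IsSymm) (a w : E) :
    B (a - w) (a - w) = B a a - 2 * B a w + B w w := by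
  simp only [map_sub, LinearMap.sub_apply, hB.eq w a]
  ring

theorem IsSymm.add_half_apply_sub_le_of_isMinOn (hB : B.IsSymm) {g : E → ℝ}
    (hg : ConvexOn ℝ univ g) {y p : E}
    (hp : IsMinOn (fun v => g v + 1 / 2 * B (y - v) (y - v)) univ p) (z : E) :
    g p + 1 / 2 * B (y - p) (y - p) + 1 / 2 * B (z - p) (z - p) ≤
      g z + 1 / 2 * B (y - z) (y - z) := by
  have hsegment : ∀ t ∈ Ioc (0 : ℝ) 1,
      0 ≤ (g z - g p - B (y - p) (z - p)) + t * (B (z - p) (z - p) / 2) := by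
    intro t ht
    have hmin : g p + 1 / 2 * B (y - p) (y - p) ≤
        g (p + t • (z - p)) + 1 / 2 * B (y - (p + t • (z - p))) (y - (p + t • (z - p))) :=
      hp (mem_univ _)
    have hconv : g (p + t • (z - p)) ≤ (1 - t) * g p + t * g z := by
      have := hg.2 (mem_univ p) (mem_univ z) (sub_nonneg.2 ht.2) ht.1.le (by ring)
      rwa [smul_eq_mul, smul_eq_mul, show (1 - t) • p + t • z = p + t • (z - p) by module] at this
    have hexp : B (y - (p + t • (z - p))) (y - (p + t • (z - p))) =
        B (y - p) (y - p) - 2 * t * B (y - p) (z - p) + t ^ 2 * B (z - p) (z - p) := by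
      rw [show y - (p + t • (z - p)) = (y - p) - t • (z - p) by abel, hB.apply_sub_sub]
      simp only [map_smul, LinearMap.smul_apply, smul_eq_mul]
      ring
    have : 0 ≤ t * ((g z - g p - B (y - p) (z - p)) + t * (B (z - p) (z - p) / 2)) := by
      rw [hexp] at hmin
      linarith
    exact (mul_nonneg_iff_of_pos_left ht.1).1 this
  have hfirst_order := nonneg_of_forall_mem_Ioc_nonneg_add_mul hsegment
  rw [show y - z = (y - p) - (z - p) by abel, hB.apply_sub_sub (y - p) (z - p)]
  linarith

end LinearMap.BilinForm

lemma le_add_add_half_of_hasDerivAt_of_sub_le {φ φ' : ℝ → ℝ} {M : ℝ}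
    (hφ : ∀ t, HasDerivAt φ (φ' t) t) (hM : ∀ t ∈ Icc (0 : ℝ) 1, φ' t - φ' 0 ≤ M * t) :
    φ 1 ≤ φ 0 + φ' 0 + M / 2 := by
  set q : ℝ → ℝ := fun t => φ 0 + t * φ' 0 + M / 2 * t ^ 2 - φ t
  have hq : ∀ t, HasDerivAt q (φ' 0 + M * t - φ' t) t := fun t =>
    ((((hasDerivAt_id t).mul_const (φ' 0)).const_add (φ 0)).add
      ((hasDerivAt_pow 2 t).const_mul (M / 2))).sub (hφ t) |>.congr_deriv (by ring)
  have hmono : MonotoneOn q (Icc 0 1) :=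
    monotoneOn_of_hasDerivWithinAt_nonneg (convex_Icc 0 1)
      (fun t _ => (hq t).continuousAt.continuousWithinAt) (fun t _ => (hq t).hasDerivWithinAt)
      (fun t ht => by linarith [hM t (interior_subset ht)])
  have := hmono (left_mem_Icc.2 zero_le_one) (right_mem_Icc.2 zero_le_one) zero_le_one
  simp only [q] at this
  linarith

section Smooth

variable {n : ℕ}

lemma dot_eq_dotProduct (a b : Fin n → ℝ) : dot a b = a ⬝ᵥ b := rfl

lemma sqnorm_eq_dotProduct (a : Fin n → ℝ) : sqnorm a = a ⬝ᵥ a := rfl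

lemma sqnorm_nonneg (a : Fin n → ℝ) : 0 ≤ sqnorm a :=
  Finset.sum_nonneg (s := Finset.univ) fun i _ => mul_self_nonneg (a i)

lemma dot_le_sqrt_sqnorm_mul_sqrt_sqnorm (a b : Fin n → ℝ) :
    dot a b ≤ √(sqnorm a) * √(sqnorm b) := by
  simpa only [sqnorm, dot, sq] using Real.sum_mul_le_sqrt_mul_sqrt Finset.univ a b

lemma sqrt_sqnorm_smul {t : ℝ} (ht : 0 ≤ t) (a : Fin n → ℝ) :
    √(sqnorm (t • a)) = t * √(sqnorm a) := by
  rw [sqnorm_eq_dotProduct, smul_dotProduct, dotProduct_smul, smul_eq_mul, smul_eq_mul,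
    ← mul_assoc, Real.sqrt_mul (mul_self_nonneg t), Real.sqrt_mul_self ht, sqnorm_eq_dotProduct]

variable {f : (Fin n → ℝ) → ℝ} {f' : (Fin n → ℝ) → (Fin n → ℝ)} {L : ℝ}

lemma hasDerivAt_apply_add_smul
    (hdiff : ∀ x v, HasDerivAt (fun t : ℝ => f (x + t • v)) (dot (f' x) v) 0)
    (x d : Fin n → ℝ) (t : ℝ) :
    HasDerivAt (fun s : ℝ => f (x + s • d)) (dot (f' (x + t • d)) d) t := by
  have h : HasDerivAt (fun s : ℝ => f (x + t • d + s • d)) (dot (f' (x + t • d)) d) (t - t) := by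
    simpa using hdiff (x + t • d) d
  have hline : (fun s : ℝ => f (x + s • d)) = fun s => f (x + t • d + (s - t) • d) := by
    funext s
    rw [sub_smul, add_add_sub_cancel]
  rw [hline]
  exact h.comp_sub_const t t

theorem le_add_dot_add_half_sqnorm
    (hdiff : ∀ x v, HasDerivAt (fun t : ℝ => f (x + t • v)) (dot (f' x) v) 0)
    (hsmooth : ∀ x y, √(sqnorm (f' x - f' y)) ≤ L * √(sqnorm (x - y)))
    (x d : Fin n → ℝ) :
    f (x + d) ≤ f x + dot (f' x) d + L / 2 * sqnorm d := by
  have key := le_add_add_half_of_hasDerivAt_of_sub_le (M := L * sqnorm d)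
    (hasDerivAt_apply_add_smul hdiff x d) fun t ht => calc
      dot (f' (x + t • d)) d - dot (f' (x + (0 : ℝ) • d)) d = dot (f' (x + t • d) - f' x) d := by
        rw [zero_smul, add_zero, dot_eq_dotProduct, dot_eq_dotProduct, dot_eq_dotProduct,
          sub_dotProduct]
      _ ≤ √(sqnorm (f' (x + t • d) - f' x)) * √(sqnorm d) :=
        dot_le_sqrt_sqnorm_mul_sqrt_sqnorm _ _
      _ ≤ L * √(sqnorm (x + t • d - x)) * √(sqnorm d) := by gcongr; exact hsmooth _ _
      _ = L * sqnorm d * t := by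
        rw [add_sub_cancel_left, sqrt_sqnorm_smul ht.1]
        linear_combination L * t * Real.mul_self_sqrt (sqnorm_nonneg d)
  simp only [zero_smul, add_zero, one_smul] at key
  linarith

end Smooth

namespace Matrix

variable {ι : Type*} [DecidableEq ι] {U : Matrix ι ι ℝ} {L : ℝ}

lemma PosSemidef.posDef_of_sub_smul_one (hUL : (U - L • 1).PosSemidef) (hL : 0 < L) :
    U.PosDef := by
  simpa using PosDef.posSemidef_add hUL (PosDef.one.smul hL)

lemma PosSemidef.smul_dotProduct_self_le_of_sub_smul_one [Fintype ι]
    (hUL : (U - L • 1).PosSemidef) (v : ι → ℝ) : L * (v ⬝ᵥ v) ≤ v ⬝ᵥ U *ᵥ v := by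
  have := hUL.dotProduct_mulVec_nonneg v
  rw [star_trivial, sub_mulVec, smul_mulVec, one_mulVec, dotProduct_sub, dotProduct_smul,
    smul_eq_mul] at this
  linarith

lemma PosDef.inv_mulVec_dotProduct_mulVec [Fintype ι] (hU : U.PosDef) (v w : ι → ℝ) :
    U⁻¹ *ᵥ v ⬝ᵥ U *ᵥ w = v ⬝ᵥ w := by
  rw [dotProduct_mulVec, ← mulVec_transpose, (isHermitian_iff_isSymm.1 hU.isHermitian).eq,
    mulVec_mulVec, mul_nonsing_inv _ ((isUnit_iff_isUnit_det U).1 hU.isUnit), one_mulVec]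

end Matrix

theorem sufficient_decrease_general {n : ℕ} (f g : (Fin n → ℝ) → ℝ)
    (f' : (Fin n → ℝ) → (Fin n → ℝ)) (L : ℝ) (hL : 0 < L)
    (hgconv : ConvexOn ℝ Set.univ g)
    (hdiff : ∀ x v, HasDerivAt (fun t : ℝ => f (x + t • v)) (dot (f' x) v) 0)
    (hsmooth : ∀ x y, Real.sqrt (sqnorm (f' x - f' y)) ≤ L * Real.sqrt (sqnorm (x - y)))
    (U : Matrix (Fin n) (Fin n) ℝ)
    (hUL : (U - L • (1 : Matrix (Fin n) (Fin n) ℝ)).PosSemidef)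
    (x xplus : Fin n → ℝ)
    (hxplus : IsMinOn (fun v => g v + (1 / 2) *
        dot ((x - U⁻¹.mulVec (f' x)) - v) (U.mulVec ((x - U⁻¹.mulVec (f' x)) - v)))
      Set.univ xplus) :
    f xplus + g xplus ≤
      (f x + g x) - (1 / 2) * dot (xplus - x) (U.mulVec (xplus - x)) := by
  have hU : U.PosDef := hUL.posDef_of_sub_smul_one hL
  have hB : (toBilin' U).IsSymm :=
    isSymm_toBilin'_iff_isSymm.2 (isHermitian_iff_isSymm.1 hU.isHermitian)
  have hprox := hB.add_half_apply_sub_le_of_isMinOn hgconv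
    (by simpa only [toBilin'_apply', dot_eq_dotProduct] using hxplus) x
  rw [show x - U⁻¹ *ᵥ f' x - xplus = -(U⁻¹ *ᵥ f' x) - (xplus - x) by abel,
    hB.apply_sub_sub, show x - xplus = -(xplus - x) by abel] at hprox
  simp only [toBilin'_apply', sub_sub_cancel_left, neg_dotProduct, mulVec_neg, dotProduct_neg,
    neg_neg, hU.inv_mulVec_dotProduct_mulVec] at hprox
  have hdesc := le_add_dot_add_half_sqnorm hdiff hsmooth x (xplus - x)
  rw [add_sub_cancel] at hdesc
  have hLU := hUL.smul_dotProduct_self_le_of_sub_smul_one (xplus - x)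
  simp only [dot_eq_dotProduct, sqnorm_eq_dotProduct] at hdesc ⊢
  linarith

theorem sufficient_decrease {n : ℕ} (f g : (Fin n → ℝ) → ℝ)
    (f' : (Fin n → ℝ) → (Fin n → ℝ)) (L : ℝ) (hL : 0 < L)
    (hfconv : ConvexOn ℝ Set.univ f) (hgconv : ConvexOn ℝ Set.univ g)
    (hdiff : ∀ x v, HasDerivAt (fun t : ℝ => f (x + t • v)) (dot (f' x) v) 0)
    (hsmooth : ∀ x y, Real.sqrt (sqnorm (f' x - f' y)) ≤ L * Real.sqrt (sqnorm (x - y)))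
    (U : Matrix (Fin n) (Fin n) ℝ) (hUsymm : U.IsSymm)
    (hUL : (U - L • (1 : Matrix (Fin n) (Fin n) ℝ)).PosSemidef)
    (x xplus : Fin n → ℝ)
    (hxplus : IsMinOn (fun v => g v + (1 / 2) *
        dot ((x - U⁻¹.mulVec (f' x)) - v) (U.mulVec ((x - U⁻¹.mulVec (f' x)) - v)))
      Set.univ xplus) :
    f xplus + g xplus ≤
      (f x + g x) - (1 / 2) * dot (xplus - x) (U.mulVec (xplus - x)) :=
  sufficient_decrease_general f g f' L hL hgconv hdiff hsmooth U hUL x xplus hxplus
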